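/- Let f : ℝ → ℝ be continuous with f(s) > 0 for all s ≥ 0, and suppose ∫_{B₀}^∞ ds/f(s) < ∞. If B : [0,T) → ℝ is differentiable with B(0) = B₀ and B'(t) ≥ ε f(B(t)) for all t, where ε > 0, then B cannot exist globally: T ≤ (1/ε) ∫_{B₀}^∞ ds/f(s). In particular B blows up in finite time. -/

import Mathlib

/-!
Along a solution, `u ↦ ∫_{B 0}^{B u} ds / f s - ε u` is nondecreasing: by the chain rule and the
fundamental theorem of calculus its derivative is `B' u / f (B u) - ε ≥ 0`. Hence
`ε t ≤ ∫_{B₀}^{B t} ds / f s ≤ ∫_{B₀}^∞ ds / f s` for every `t < T`.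
-/

open Set Filter MeasureTheory

lemma monotoneOn_Icc_of_hasDerivAt_nonneg {g g' : ℝ → ℝ} {a b : ℝ}
    (hg : ∀ x ∈ Icc a b, HasDerivAt g (g' x) x) (hg' : ∀ x ∈ Icc a b, 0 ≤ g' x) :
    MonotoneOn g (Icc a b) := by
  refine monotoneOn_of_hasDerivWithinAt_nonneg (f' := g') (convex_Icc a b)
    (fun x hx => (hg x hx).continuousAt.continuousWithinAt) (fun x hx => ?_) fun x hx => ?_
  · rw [interior_Icc] at hx ⊢
    exact (hg x (Ioo_subset_Icc_self hx)).hasDerivWithinAt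
  · rw [interior_Icc] at hx
    exact hg' x (Ioo_subset_Icc_self hx)

lemma pos_of_mem_uIcc_of_pos_comp {f B : ℝ → ℝ} {a b : ℝ} (hab : a ≤ b)
    (hB : ContinuousOn B (Icc a b)) (hpos : ∀ u ∈ Icc a b, 0 < f (B u)) :
    ∀ y ∈ uIcc (B a) (B b), 0 < f y := by
  intro y hy
  rw [← uIcc_of_le hab] at hB hpos
  obtain ⟨u, hu, rfl⟩ := intermediate_value_uIcc hB hy
  exact hpos u hu

theorem mul_sub_le_intervalIntegral_one_div {f B B' : ℝ → ℝ} {a b ε : ℝ} (hf : Continuous f)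
    (hab : a ≤ b) (hB : ∀ u ∈ Icc a b, HasDerivAt B (B' u) u)
    (hpos : ∀ u ∈ Icc a b, 0 < f (B u)) (hle : ∀ u ∈ Icc a b, ε * f (B u) ≤ B' u) :
    ε * (b - a) ≤ ∫ s in B a..B b, 1 / f s := by
  have hBc : ContinuousOn B (Icc a b) := fun u hu => (hB u hu).continuousAt.continuousWithinAt
  have hF : ∀ u ∈ Icc a b,
      HasDerivAt (fun x => ∫ s in B a..x, 1 / f s) (1 / f (B u)) (B u) := by
    intro u hu
    have hsub : Icc a u ⊆ Icc a b := Icc_subset_Icc_right hu.2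
    have hfu := pos_of_mem_uIcc_of_pos_comp hu.1 (hBc.mono hsub) fun v hv => hpos v (hsub hv)
    refine intervalIntegral.integral_hasDerivAt_right ?_
      (hf.measurable.const_div 1).aestronglyMeasurable.stronglyMeasurableAtFilter
      (continuousAt_const.div hf.continuousAt (hpos u hu).ne')
    exact (continuousOn_const.div hf.continuousOn fun y hy => (hfu y hy).ne').intervalIntegrable
  have hφ : MonotoneOn (fun u => (∫ s in B a..B u, 1 / f s) - ε * u) (Icc a b) := by
    refine monotoneOn_Icc_of_hasDerivAt_nonneg
      (fun u hu => (((hF u hu).comp u (hB u hu)).sub ((hasDerivAt_id u).const_mul ε)))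
      fun u hu => ?_
    rw [mul_one, sub_nonneg, one_div_mul_eq_div, le_div_iff₀ (hpos u hu)]
    exact hle u hu
  have := hφ (left_mem_Icc.2 hab) (right_mem_Icc.2 hab) hab
  simp only [intervalIntegral.integral_same] at this
  linarith

lemma intervalIntegral_le_integral_Ioi {g : ℝ → ℝ} {a b : ℝ} (hab : a ≤ b)
    (hg : IntegrableOn g (Ioi a)) (hg₀ : ∀ x ∈ Ioi a, 0 ≤ g x) :
    ∫ x in a..b, g x ≤ ∫ x in Ioi a, g x := by
  rw [intervalIntegral.integral_of_le hab]
  exact setIntegral_mono_set hg ((ae_restrict_iff' measurableSet_Ioi).2 (ae_of_all _ hg₀))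
    (ae_of_all _ Ioc_subset_Ioi_self)

theorem stmt_0_general (f : ℝ → ℝ) (hf : Continuous f) (hfpos : ∀ s, 0 ≤ s → 0 < f s)
    (B₀ : ℝ) (hB₀ : 0 ≤ B₀)
    (hint : IntegrableOn (fun s => 1 / f s) (Ioi B₀))
    (T ε : ℝ) (hε : 0 < ε)
    (B : ℝ → ℝ) (hB0 : B 0 = B₀)
    (hderiv : ∀ t ∈ Ico (0:ℝ) T, HasDerivAt B (deriv B t) t ∧ ε * f (B t) ≤ deriv B t)
    (hBnn : ∀ t ∈ Ico (0:ℝ) T, 0 ≤ B t) :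
    T ≤ (1 / ε) * ∫ s in Ioi B₀, 1 / f s := by
  have hpos : ∀ s ∈ Ioi B₀, 0 ≤ 1 / f s := fun s hs =>
    (one_div_pos.2 (hfpos s (hB₀.trans hs.le))).le
  have hgrowth : ∀ t ∈ Ico 0 T, ε * t ≤ ∫ s in Ioi B₀, 1 / f s := by
    rintro t ⟨ht0, htT⟩
    have hsub : Icc 0 t ⊆ Ico 0 T := Icc_subset_Ico_right htT
    have hB : ∀ u ∈ Icc 0 t, HasDerivAt B (deriv B u) u := fun u hu => (hderiv u (hsub hu)).1
    have hle : ∀ u ∈ Icc 0 t, ε * f (B u) ≤ deriv B u := fun u hu => (hderiv u (hsub hu)).2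
    have hfB : ∀ u ∈ Icc 0 t, 0 < f (B u) := fun u hu => hfpos _ (hBnn u (hsub hu))
    have hBt : B₀ ≤ B t := hB0 ▸ monotoneOn_Icc_of_hasDerivAt_nonneg hB
      (fun u hu => (mul_pos hε (hfB u hu)).le.trans (hle u hu))
      (left_mem_Icc.2 ht0) (right_mem_Icc.2 ht0) ht0
    calc ε * t = ε * (t - 0) := by rw [sub_zero]
      _ ≤ ∫ s in B₀..B t, 1 / f s := hB0 ▸ mul_sub_le_intervalIntegral_one_div hf ht0 hB hfB hle
      _ ≤ ∫ s in Ioi B₀, 1 / f s := intervalIntegral_le_integral_Ioi hBt hint hpos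
  refine le_of_forall_lt_imp_le_of_dense fun t htT => ?_
  rcases lt_or_ge t 0 with ht0 | ht0
  · exact ht0.le.trans (mul_nonneg (by positivity) (setIntegral_nonneg measurableSet_Ioi hpos))
  · rw [one_div_mul_eq_div, le_div_iff₀' hε]
    exact hgrowth t ⟨ht0, htT⟩

/-- Osgood-type blow-up criterion for differential inequalities. -/
theorem stmt_0 (f : ℝ → ℝ) (hf : Continuous f) (hfpos : ∀ s, 0 ≤ s → 0 < f s)
    (B₀ : ℝ) (hB₀ : 0 ≤ B₀)
    (hint : IntegrableOn (fun s => 1 / f s) (Ioi B₀))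
    (T ε : ℝ) (hε : 0 < ε) (hT : 0 < T)
    (B : ℝ → ℝ) (hB0 : B 0 = B₀)
    (hderiv : ∀ t ∈ Ico (0:ℝ) T, HasDerivAt B (deriv B t) t ∧ ε * f (B t) ≤ deriv B t)
    (hBnn : ∀ t ∈ Ico (0:ℝ) T, 0 ≤ B t) :
    T ≤ (1 / ε) * ∫ s in Ioi B₀, 1 / f s :=
  stmt_0_general f hf hfpos B₀ hB₀ hint T ε hε B hB0 hderiv hBnn
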